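/- Let k ≥ 2. Suppose that for each ξ < ω₁ we are given a condition q_ξ = (u_{q_ξ}, A_{q_ξ}, h_{q_ξ}) in P_*^k, a finite nonempty set u*_ξ ⊆ u_{q_ξ} such that the sets u*_ξ (ξ < ω₁) are pairwise disjoint, and for each α ∈ u*_ξ a set v*_{ξ,α} ⊆ u_{q_ξ} such that no (k+1)-element subset of v*_{ξ,α} belongs to A_{q_ξ} and v*_{ξ,α} is not contained in α (i.e., v*_{ξ,α} has an element ≥ α). Then there exist ξ₀ < … < ξ_k < ω₁ and a condition q ∈ P_*^k with q ≤ q_{ξ_ℓ} for all ℓ ≤ k, such that for every choice of ordinals α_ℓ ∈ u*_{ξ_ℓ} (ℓ ≤ k), some (k+1)-element subset of ⋃_{ℓ≤k} v*_{ξ_ℓ,α_ℓ} belongs to A_q. -/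

import Mathlib

/-- The type of countable ordinals, representing `ω₁`. -/
abbrev O1 : Type 1 := {o : Ordinal // o < Ordinal.omega 1}

/-- A condition of the poset `P_*^k`: a triple `(u, A, h)` where `u` is a finite
subset of `ω₁`, `A` is a set of `(k+1)`-element subsets of `u`, and `h` is a
function from `℘ = {v ⊆ u : no (k+1)-element subset of v belongs to A}` to `ω`
(coded as an `Option ℕ`-valued function whose domain is exactly `℘`) such that
whenever `h` is constant on `w₀, …, w_{k-1} ∈ ℘`, then `w₀ ∪ … ∪ w_{k-1} ∈ ℘`. -/
structure PStar (k : ℕ) : Type 1 where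
  u : Finset O1
  A : Finset (Finset O1)
  h : Finset O1 → Option ℕ
  hA : ∀ a ∈ A, a ⊆ u ∧ a.card = k + 1
  hdom : ∀ v : Finset O1, (h v).isSome ↔
    (v ⊆ u ∧ ∀ a : Finset O1, a.card = k + 1 → a ⊆ v → a ∉ A)
  hlin : ∀ (w : Fin k → Finset O1) (n : ℕ), (∀ i, h (w i) = some n) →
    (h (Finset.univ.biUnion w)).isSome

/-- The order of `P_*^k`: `p ≤ q` iff `u_q ⊆ u_p`, `A_q = A_p ∩ [u_q]^{k+1}`, and
`h_q ⊆ h_p`. -/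
def PStar.le {k : ℕ} (p q : PStar k) : Prop :=
  q.u ⊆ p.u ∧ (∀ a : Finset O1, a ∈ q.A ↔ a ∈ p.A ∧ a ⊆ q.u) ∧
  ∀ v : Finset O1, (q.h v).isSome → p.h v = q.h v

/-! By the Δ-system lemma and pigeonhole on isomorphism types, uncountably many of the `q ξ`
have domains forming a Δ-system with root `r`, are pairwise isomorphic over `r`, and have `u* ξ`
entirely above `r`. Any `k + 1` of them amalgamate: take the union of the domains and of the
`A`'s, add to `A` every `(k + 1)`-set meeting each petal `u_ℓ \ r`, and give the new members of
`℘` fresh, pairwise distinct colours. A union of `k` sets of one old colour transports into a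
single `q_ℓ` along the isomorphisms, and `k` sets inside old domains cannot meet all `k + 1`
petals, so linkedness survives. Finally, for `α_ℓ ∈ u*_{ξ_ℓ}` a witness `β_ℓ ∈ v*_{ξ_ℓ,α_ℓ}` with
`α_ℓ ≤ β_ℓ` lies in the petal of `ξ_ℓ`, so `{β_0, …, β_k}` is one of the added sets. -/

open Finset Function

open Cardinal Ordinal in
instance : Uncountable O1 := by
  rw [← aleph0_lt_mk_iff, ← aleph_one_le_iff]
  change _ ≤ #(Set.Iio (ω₁ : Ordinal.{0}))
  rw [Cardinal.mk_Iio_ordinal, Ordinal.card_omega]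
  simp

open Cardinal Ordinal in
theorem O1.countable_Iic (y : O1) : (Set.Iic y).Countable := by
  have hy : Order.succ y.val < ω₁ := (isSuccLimit_omega 1).succ_lt y.2
  have : (Set.Iio (Order.succ y.val)).Countable := by
    rw [← le_aleph0_iff_set_countable, Cardinal.mk_Iio_ordinal, lift_le_aleph0,
      ← lt_aleph_one_iff, ← lt_ord, ord_aleph]
    exact hy
  exact (this.preimage Subtype.val_injective).mono fun x hx =>
    Order.lt_succ_of_le (α := Ordinal) hx

section Uncountable

variable {ι α : Type*}

theorem not_countable_diff {S B : Set ι} (hS : ¬S.Countable) (hB : B.Countable) :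
    ¬(S \ B).Countable :=
  fun h => hS ((h.union hB).mono (Set.subset_sdiff_union S B))

theorem Set.nonempty_of_not_countable {S : Set ι} (hS : ¬S.Countable) : S.Nonempty :=
  Set.nonempty_iff_ne_empty.mpr fun h => hS (h ▸ Set.countable_empty)

theorem exists_not_countable_fiber {C : Type*} [Countable C] {S : Set ι} (hS : ¬S.Countable)
    (f : ι → C) : ∃ c, ¬{ξ ∈ S | f ξ = c}.Countable := by
  by_contra! h
  refine hS ((Set.countable_iUnion h).mono fun ξ hξ => Set.mem_iUnion.mpr ⟨f ξ, ?_⟩)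
  exact ⟨hξ, rfl⟩

theorem countable_setOf_inter_nonempty {s : ι → Set α} (hs : Pairwise (Disjoint on s))
    {D : Set α} (hD : D.Countable) : {i | (s i ∩ D).Nonempty}.Countable := by
  refine (hD.biUnion fun x _ => Set.Subsingleton.countable (s := {i | x ∈ s i}) ?_).mono ?_
  · exact fun i hi j hj => hs.eq fun hd => Set.disjoint_left.mp hd hi hj
  · rintro i ⟨x, hxi, hxD⟩
    exact Set.mem_biUnion hxD hxi

theorem exists_delta_root_of_card_le (f : ι → Finset α) (n : ℕ) {S : Set ι}
    (hS : ¬S.Countable) (hcard : ∀ ξ ∈ S, (f ξ).card ≤ n) :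
    ∃ (r : Finset α) (T : Set ι), T ⊆ S ∧ ¬T.Countable ∧ (∀ ξ ∈ T, r ⊆ f ξ) ∧
      ∀ x ∉ r, {ξ ∈ T | x ∈ f ξ}.Countable := by
  classical
  induction n generalizing f S with
  | zero =>
    refine ⟨∅, S, subset_rfl, hS, fun _ _ => empty_subset _, fun x _ => ?_⟩
    refine Set.countable_empty.mono fun ξ hξ => ?_
    exact (card_pos.mpr ⟨x, hξ.2⟩).not_ge (hcard ξ hξ.1)
  | succ n ih =>
    by_cases hfib : ∀ x, {ξ ∈ S | x ∈ f ξ}.Countable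
    · exact ⟨∅, S, subset_rfl, hS, fun _ _ => empty_subset _, fun x _ => hfib x⟩
    push Not at hfib
    obtain ⟨x₀, hx₀⟩ := hfib
    obtain ⟨r, T, hTS, hT, hr, hfibT⟩ := ih (fun ξ => (f ξ).erase x₀) hx₀ fun ξ hξ => by
      rw [card_erase_of_mem hξ.2]
      exact Nat.sub_le_of_le_add (hcard ξ hξ.1)
    refine ⟨insert x₀ r, T, fun ξ hξ => (hTS hξ).1, hT, fun ξ hξ => ?_, fun x hx => ?_⟩
    · exact insert_subset (hTS hξ).2 ((hr ξ hξ).trans (erase_subset _ _))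
    · rw [mem_insert, not_or] at hx
      simpa only [mem_erase, hx.1, ne_eq, not_false_eq_true, true_and] using hfibT x hx.2

theorem exists_delta_root (f : ι → Finset α) {S : Set ι} (hS : ¬S.Countable) :
    ∃ (r : Finset α) (T : Set ι), T ⊆ S ∧ ¬T.Countable ∧ (∀ ξ ∈ T, r ⊆ f ξ) ∧
      ∀ x ∉ r, {ξ ∈ T | x ∈ f ξ}.Countable := by
  obtain ⟨n, hn⟩ := exists_not_countable_fiber hS fun ξ => (f ξ).card
  obtain ⟨r, T, hTS, hT, hr, hfib⟩ := exists_delta_root_of_card_le f n hn fun ξ hξ => hξ.2.le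
  exact ⟨r, T, hTS.trans (Set.sep_subset _ _), hT, hr, hfib⟩

theorem exists_finset_pairwise_inter_subset [DecidableEq α] (f : ι → Finset α) {r : Finset α}
    {T : Set ι} (hT : ¬T.Countable) (hfib : ∀ x ∉ r, {ξ ∈ T | x ∈ f ξ}.Countable) (m : ℕ) :
    ∃ F : Finset ι, ↑F ⊆ T ∧ F.card = m ∧ (F : Set ι).Pairwise fun ξ η => f ξ ∩ f η ⊆ r := by
  classical
  induction m with
  | zero => exact ⟨∅, by simp, rfl, by simp⟩
  | succ m ih =>
    obtain ⟨F, hFT, hcard, hpair⟩ := ih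
    have hB : (↑F ∪ ⋃ x ∈ F.biUnion f \ r, {ξ ∈ T | x ∈ f ξ}).Countable :=
      F.countable_toSet.union <| (F.biUnion f \ r).countable_toSet.biUnion fun x hx =>
        hfib x (mem_sdiff.mp hx).2
    obtain ⟨η, hηT, hηB⟩ := Set.nonempty_of_not_countable (not_countable_diff hT hB)
    have hηF : η ∉ F := fun h => hηB (Or.inl h)
    have hη : ∀ ξ ∈ F, f η ∩ f ξ ⊆ r := fun ξ hξ x hx => by
      by_contra hxr
      refine hηB (Or.inr (Set.mem_biUnion (x := x) ?_ ⟨hηT, (mem_inter.mp hx).1⟩))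
      exact mem_sdiff.mpr ⟨mem_biUnion.mpr ⟨ξ, hξ, (mem_inter.mp hx).2⟩, hxr⟩
    refine ⟨insert η F, ?_, by rw [card_insert_of_notMem hηF, hcard], ?_⟩
    · rw [coe_insert]; exact Set.insert_subset hηT hFT
    · rw [coe_insert, Set.pairwise_insert]
      exact ⟨hpair, fun ξ hξ _ => ⟨hη ξ hξ, inter_comm (f η) (f ξ) ▸ hη ξ hξ⟩⟩

end Uncountable

section Shape

variable {α β : Type*} [LinearOrder α]

def rankIn (u : Finset α) (x : α) : ℕ := (u.filter (· < x)).card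

theorem strictMonoOn_rankIn (u : Finset α) : StrictMonoOn (rankIn u) u := by
  intro x hx y _ hxy
  refine card_lt_card ((ssubset_iff_of_subset fun z hz => ?_).mpr ⟨x, ?_, ?_⟩)
  · rw [mem_filter] at hz ⊢; exact ⟨hz.1, hz.2.trans hxy⟩
  · exact mem_filter.mpr ⟨hx, hxy⟩
  · simp

theorem image_rankIn_injOn {u v w : Finset α} (hv : v ⊆ u) (hw : w ⊆ u)
    (h : v.image (rankIn u) = w.image (rankIn u)) : v = w := by
  rw [← coe_inj, ← (strictMonoOn_rankIn u).injOn.image_eq_image_iff hv hw, ← coe_image,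
    ← coe_image, h]

/-- The isomorphism type of `h` on the subsets of `u`, read through the increasing enumeration
of `u`. -/
def shape [DecidableEq β] (u : Finset α) (h : Finset α → β) : Finset (Finset ℕ × β) :=
  u.powerset.image fun v => (v.image (rankIn u), h v)

theorem exists_transport [DecidableEq β] {u u' r : Finset α} {h h' : Finset α → β}
    (hshape : shape u h = shape u' h') (hr : r ⊆ u) (hr' : r ⊆ u')
    (hrank : ∀ x ∈ r, rankIn u x = rankIn u' x) :
    ∃ f : α → α, (∀ x ∈ r, f x = x) ∧ ∀ v ⊆ u, h' (v.image f) = h v := by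
  have hcounterpart :
      ∀ v ⊆ u, ∃ w ⊆ u', w.image (rankIn u') = v.image (rankIn u) ∧ h' w = h v := fun v hv => by
      have hmem : (v.image (rankIn u), h v) ∈ shape u' h' :=
        hshape ▸ mem_image_of_mem _ (mem_powerset.mpr hv)
      obtain ⟨w, hw, hweq⟩ := mem_image.mp hmem
      exact ⟨w, mem_powerset.mp hw, congrArg Prod.fst hweq, congrArg Prod.snd hweq⟩
  have hpoint : ∀ x ∈ u, ∃ y, y ∈ u' ∧ rankIn u' y = rankIn u x := fun x hx => by
    obtain ⟨w, hw, hweq, -⟩ := hcounterpart {x} (singleton_subset_iff.mpr hx)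
    obtain ⟨y, hy, hyx⟩ := mem_image.mp (hweq ▸ mem_image_of_mem _ (mem_singleton_self x))
    exact ⟨y, hw hy, hyx⟩
  choose! f hfu hfrank using hpoint
  refine ⟨f, fun x hx => ?_, fun v hv => ?_⟩
  · exact (strictMonoOn_rankIn u').injOn (hfu x (hr hx)) (hr' hx)
      ((hfrank x (hr hx)).trans (hrank x hx))
  · obtain ⟨w, hw, hweq, hhw⟩ := hcounterpart v hv
    have himage : v.image f ⊆ u' := image_subset_iff.mpr fun x hx => hfu x (hv hx)
    have hfw : v.image f = w := image_rankIn_injOn himage hw <| by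
      rw [image_image, hweq]
      exact image_congr fun x hx => hfrank x (hv hx)
    rw [hfw, hhw]

end Shape

noncomputable section

namespace PStar

variable {k : ℕ}

theorem mem_A_iff_h_eq_none (p : PStar k) {a : Finset O1} (hau : a ⊆ p.u)
    (hcard : a.card = k + 1) : a ∈ p.A ↔ p.h a = none := by
  rw [← Option.not_isSome_iff_eq_none, p.hdom, not_and, not_forall]
  refine ⟨fun haA _ => ⟨a, by simp [hcard, haA]⟩, fun h => ?_⟩
  obtain ⟨b, hb⟩ := h hau
  simp only [Classical.not_imp, not_not] at hb
  obtain ⟨hbcard, hba, hbA⟩ := hb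
  rwa [← eq_of_subset_of_card_le hba (by omega)]

theorem subset_u_of_isSome (p : PStar k) {v : Finset O1} (hv : (p.h v).isSome) : v ⊆ p.u :=
  ((p.hdom v).mp hv).1

/-- "The `P l` form a Δ-system with root `r` and are pairwise isomorphic over `r`", recording of
each isomorphism only that it fixes `r` and carries `h` along. -/
structure IsIsoDeltaSystem (P : Fin (k + 1) → PStar k) (r : Finset O1) : Prop where
  inter_subset : ∀ l m, l ≠ m → (P l).u ∩ (P m).u ⊆ r
  transport : ∀ l m, ∃ f : O1 → O1,
    (∀ x ∈ r, f x = x) ∧ ∀ v ⊆ (P l).u, (P m).h (v.image f) = (P l).h v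

namespace IsIsoDeltaSystem

variable {P : Fin (k + 1) → PStar k} {r : Finset O1}

theorem h_eq (hP : IsIsoDeltaSystem P r) (l m : Fin (k + 1)) {v : Finset O1}
    (hvu : v ⊆ (P l).u) (hvr : v ⊆ r) : (P m).h v = (P l).h v := by
  obtain ⟨f, hfr, hfh⟩ := hP.transport l m
  rw [← hfh v hvu, image_congr (g := id) fun x hx => hfr x (hvr hx), image_id]

theorem mem_A (hP : IsIsoDeltaSystem P r) {l m : Fin (k + 1)} {a : Finset O1}
    (ha : a ∈ (P l).A) (har : a ⊆ r) (ham : a ⊆ (P m).u) : a ∈ (P m).A := by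
  obtain ⟨hal, hcard⟩ := (P l).hA a ha
  rw [mem_A_iff_h_eq_none _ ham hcard, hP.h_eq l m hal har]
  rwa [← mem_A_iff_h_eq_none _ hal hcard]

theorem injective_of_mem_sdiff (hP : IsIsoDeltaSystem P r) {β : Fin (k + 1) → O1}
    (hβ : ∀ l, β l ∈ (P l).u \ r) : Injective β := by
  intro l m hlm
  by_contra hne
  have hl := mem_sdiff.mp (hβ l)
  exact hl.2 (hP.inter_subset l m hne (mem_inter.mpr ⟨hl.1, hlm ▸ (mem_sdiff.mp (hβ m)).1⟩))

end IsIsoDeltaSystem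

variable (P : Fin (k + 1) → PStar k) (r : Finset O1)

def amalgU : Finset O1 := univ.biUnion fun l => (P l).u

def transversals : Finset (Finset O1) :=
  (amalgU P).powerset.filter fun a => a.card = k + 1 ∧ ∀ l, ∃ x ∈ a, x ∈ (P l).u \ r

def amalgA : Finset (Finset O1) := univ.biUnion (fun l => (P l).A) ∪ transversals P r

def amalgDom : Set (Finset O1) :=
  {v | v ⊆ amalgU P ∧ ∀ a : Finset O1, a.card = k + 1 → a ⊆ v → a ∉ amalgA P r}

def freshBound : ℕ := (univ.sup fun l => (P l).u.powerset.sup fun v => ((P l).h v).getD 0) + 1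

/-- Sets that are new in the amalgam get pairwise distinct values above all old values, so the
linkedness condition never has to combine a new set with anything but itself. -/
def amalgH (v : Finset O1) : Option ℕ :=
  open Classical in
  if v ∈ amalgDom P r then
    if hv : ∃ l, ((P l).h v).isSome then (P hv.choose).h v
    else some (freshBound P + (amalgU P).powerset.toList.idxOf v)
  else none

variable {P r}

theorem subset_amalgU (l : Fin (k + 1)) : (P l).u ⊆ amalgU P :=
  subset_biUnion_of_mem (fun l => (P l).u) (mem_univ l)

theorem lt_freshBound {l : Fin (k + 1)} {v : Finset O1} {n : ℕ} (h : (P l).h v = some n) :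
    n < freshBound P := by
  have hv : v ∈ (P l).u.powerset := mem_powerset.mpr ((P l).subset_u_of_isSome (by simp [h]))
  have := (le_sup (f := fun v => ((P l).h v).getD 0) hv).trans
    (le_sup (f := fun l => (P l).u.powerset.sup fun v => ((P l).h v).getD 0) (mem_univ l))
  simp only [h, Option.getD_some] at this
  exact Nat.lt_succ_of_le this

theorem isSome_amalgH_iff (v : Finset O1) : (amalgH P r v).isSome ↔ v ∈ amalgDom P r := by
  unfold amalgH
  split_ifs with hdom hv
  · exact iff_of_true hv.choose_spec hdom
  · exact iff_of_true rfl hdom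
  · exact iff_of_false (by simp) hdom

theorem amalgH_eq_some {v : Finset O1} {n : ℕ} (h : amalgH P r v = some n) :
    (∃ l, (P l).h v = some n) ∨
      v ∈ amalgDom P r ∧ n = freshBound P + (amalgU P).powerset.toList.idxOf v := by
  unfold amalgH at h
  split_ifs at h with hdom hv
  · exact Or.inl ⟨_, h⟩
  · exact Or.inr ⟨hdom, (Option.some_injective _ h).symm⟩

theorem amalgA_spec {a : Finset O1} (ha : a ∈ amalgA P r) : a ⊆ amalgU P ∧ a.card = k + 1 := by
  rcases mem_union.mp ha with ha | ha
  · obtain ⟨l, -, hl⟩ := mem_biUnion.mp ha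
    exact ⟨((P l).hA a hl).1.trans (subset_amalgU l), ((P l).hA a hl).2⟩
  · obtain ⟨hU, hcard, -⟩ := mem_filter.mp ha
    exact ⟨mem_powerset.mp hU, hcard⟩

namespace IsIsoDeltaSystem

theorem transversal_not_subset (hk : 0 < k) (hP : IsIsoDeltaSystem P r) {a : Finset O1}
    (ha : a ∈ transversals P r) (l : Fin (k + 1)) : ¬a ⊆ (P l).u := by
  intro hal
  have : Nontrivial (Fin (k + 1)) := Fin.nontrivial_iff_two_le.mpr (by omega)
  obtain ⟨m, hm⟩ := exists_ne l
  obtain ⟨x, hxa, hx⟩ := (mem_filter.mp ha).2.2 m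
  rw [mem_sdiff] at hx
  exact hx.2 (hP.inter_subset m l hm (mem_inter.mpr ⟨hx.1, hal hxa⟩))

theorem mem_amalgA_iff (hk : 0 < k) (hP : IsIsoDeltaSystem P r) {l : Fin (k + 1)}
    {a : Finset O1} (hal : a ⊆ (P l).u) : a ∈ amalgA P r ↔ a ∈ (P l).A := by
  refine ⟨fun ha => ?_, fun ha => mem_union_left _ (mem_biUnion.mpr ⟨l, mem_univ l, ha⟩)⟩
  rcases mem_union.mp ha with ha | ha
  · obtain ⟨m, -, ham⟩ := mem_biUnion.mp ha
    by_cases hml : m = l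
    · exact hml ▸ ham
    · exact hP.mem_A ham (fun x hx => hP.inter_subset m l hml
        (mem_inter.mpr ⟨((P m).hA a ham).1 hx, hal hx⟩)) hal
  · exact absurd hal (hP.transversal_not_subset hk ha l)

theorem mem_amalgDom_of_isSome (hk : 0 < k) (hP : IsIsoDeltaSystem P r) {l : Fin (k + 1)}
    {v : Finset O1} (hv : ((P l).h v).isSome) : v ∈ amalgDom P r := by
  obtain ⟨hvu, hvA⟩ := ((P l).hdom v).mp hv
  refine ⟨hvu.trans (subset_amalgU l), fun a hcard hav ha => ?_⟩
  exact hvA a hcard hav ((hP.mem_amalgA_iff hk (hav.trans hvu)).mp ha)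

theorem amalgH_eq_of_isSome (hk : 0 < k) (hP : IsIsoDeltaSystem P r) {l : Fin (k + 1)}
    {v : Finset O1} (hv : ((P l).h v).isSome) : amalgH P r v = (P l).h v := by
  have hex : ∃ m, ((P m).h v).isSome := ⟨l, hv⟩
  rw [amalgH, if_pos (hP.mem_amalgDom_of_isSome hk hv), dif_pos hex]
  by_cases hml : hex.choose = l
  · rw [hml]
  · have hvm := (P _).subset_u_of_isSome hex.choose_spec
    exact (hP.h_eq _ l hvm fun x hx =>
      hP.inter_subset _ l hml (mem_inter.mpr ⟨hvm hx, (P l).subset_u_of_isSome hv hx⟩)).symm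

theorem not_subset_biUnion_of_mem_transversals (hP : IsIsoDeltaSystem P r) {a : Finset O1}
    (ha : a ∈ transversals P r) {w : Fin k → Finset O1} (L : Fin k → Fin (k + 1))
    (hw : ∀ i, w i ⊆ (P (L i)).u) : ¬a ⊆ univ.biUnion w := by
  intro haw
  suffices Surjective L by simpa using Fintype.card_le_of_surjective L this
  intro m
  obtain ⟨x, hxa, hx⟩ := (mem_filter.mp ha).2.2 m
  obtain ⟨i, -, hxi⟩ := mem_biUnion.mp (haw hxa)
  refine ⟨i, by_contra fun hne => (mem_sdiff.mp hx).2 ?_⟩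
  exact hP.inter_subset (L i) m hne (mem_inter.mpr ⟨hw i hxi, (mem_sdiff.mp hx).1⟩)

theorem not_subset_biUnion_of_mem_A (hP : IsIsoDeltaSystem P r) {m : Fin (k + 1)}
    {a : Finset O1} (ha : a ∈ (P m).A) {w : Fin k → Finset O1} (L : Fin k → Fin (k + 1))
    {n : ℕ} (hw : ∀ i, (P (L i)).h (w i) = some n) : ¬a ⊆ univ.biUnion w := by
  classical
  intro haw
  choose f hfr hfh using fun i => hP.transport (L i) m
  have hwu : ∀ i, w i ⊆ (P (L i)).u := fun i => (P _).subset_u_of_isSome (by simp [hw i])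
  let w' : Fin k → Finset O1 := fun i => if L i = m then w i else (w i).image (f i)
  have hw' : ∀ i, (P m).h (w' i) = some n := fun i => by
    by_cases hi : L i = m
    · rw [show w' i = w i from if_pos hi, ← hi, hw i]
    · rw [show w' i = (w i).image (f i) from if_neg hi, hfh i _ (hwu i), hw i]
  refine ((P m).hdom _).mp ((P m).hlin w' n hw') |>.2 a ((P m).hA a ha).2 (fun x hxa => ?_) ha
  obtain ⟨i, -, hxi⟩ := mem_biUnion.mp (haw hxa)
  refine mem_biUnion.mpr ⟨i, mem_univ i, ?_⟩
  by_cases hi : L i = m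
  · simpa only [w', if_pos hi] using hxi
  · have hxr : x ∈ r :=
      hP.inter_subset (L i) m hi (mem_inter.mpr ⟨hwu i hxi, ((P m).hA a ha).1 hxa⟩)
    simpa only [w', if_neg hi] using mem_image.mpr ⟨x, hxi, hfr i x hxr⟩

theorem biUnion_mem_amalgDom (hP : IsIsoDeltaSystem P r) {w : Fin k → Finset O1}
    (L : Fin k → Fin (k + 1)) {n : ℕ} (hw : ∀ i, (P (L i)).h (w i) = some n) :
    univ.biUnion w ∈ amalgDom P r := by
  have hwu : ∀ i, w i ⊆ (P (L i)).u := fun i => (P _).subset_u_of_isSome (by simp [hw i])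
  refine ⟨biUnion_subset.mpr fun i _ => (hwu i).trans (subset_amalgU _), fun a _ haw ha => ?_⟩
  rcases mem_union.mp ha with ha | ha
  · obtain ⟨m, -, ham⟩ := mem_biUnion.mp ha
    exact hP.not_subset_biUnion_of_mem_A ham L hw haw
  · exact hP.not_subset_biUnion_of_mem_transversals ha L hwu haw

theorem amalgH_linked (hk : 0 < k) (hP : IsIsoDeltaSystem P r) (w : Fin k → Finset O1) (n : ℕ)
    (hw : ∀ i, amalgH P r (w i) = some n) : (amalgH P r (univ.biUnion w)).isSome := by
  rw [isSome_amalgH_iff]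
  by_cases hn : n < freshBound P
  · have hold : ∀ i, ∃ l, (P l).h (w i) = some n := fun i =>
      (amalgH_eq_some (hw i)).resolve_right fun h => by omega
    choose L hL using hold
    exact hP.biUnion_mem_amalgDom L hL
  · have hnew : ∀ i, w i ∈ amalgDom P r ∧
        n = freshBound P + (amalgU P).powerset.toList.idxOf (w i) := fun i =>
      (amalgH_eq_some (hw i)).resolve_left fun ⟨l, hl⟩ => hn (lt_freshBound hl)
    have hconst : ∀ i, w i = w ⟨0, hk⟩ := fun i =>
      (List.idxOf_inj (mem_toList.mpr (mem_powerset.mpr (hnew i).1.1))).mp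
        (Nat.add_left_cancel ((hnew i).2.symm.trans (hnew ⟨0, hk⟩).2))
    have hunion : univ.biUnion w = w ⟨0, hk⟩ :=
      (biUnion_subset.mpr fun i _ => (hconst i).subset).antisymm
        (subset_biUnion_of_mem w (mem_univ _))
    exact hunion ▸ (hnew ⟨0, hk⟩).1

def amalgam (hk : 0 < k) (hP : IsIsoDeltaSystem P r) : PStar k where
  u := amalgU P
  A := amalgA P r
  h := amalgH P r
  hA _ ha := amalgA_spec ha
  hdom := isSome_amalgH_iff
  hlin := hP.amalgH_linked hk

theorem amalgam_le (hk : 0 < k) (hP : IsIsoDeltaSystem P r) (l : Fin (k + 1)) :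
    (hP.amalgam hk).le (P l) :=
  ⟨subset_amalgU l, fun a => ⟨fun ha => ⟨(hP.mem_amalgA_iff hk ((P l).hA a ha).1).mpr ha,
    ((P l).hA a ha).1⟩, fun ⟨ha, hal⟩ => (hP.mem_amalgA_iff hk hal).mp ha⟩,
    fun _ hv => hP.amalgH_eq_of_isSome hk hv⟩

theorem image_mem_amalgam_A (hk : 0 < k) (hP : IsIsoDeltaSystem P r) {β : Fin (k + 1) → O1}
    (hβ : ∀ l, β l ∈ (P l).u \ r) : univ.image β ∈ (hP.amalgam hk).A := by
  refine mem_union_right _ (mem_filter.mpr ⟨?_, ?_, fun l => ⟨β l, mem_image_of_mem β (mem_univ l),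
    hβ l⟩⟩)
  · exact mem_powerset.mpr (image_subset_iff.mpr fun l _ => subset_amalgU l (mem_sdiff.mp (hβ l)).1)
  · rw [card_image_of_injective _ (hP.injective_of_mem_sdiff hβ), card_univ, Fintype.card_fin]

end IsIsoDeltaSystem

end PStar

end

theorem pstar_kill_linked_general (k : ℕ) (hk : 2 ≤ k)
    (q : O1 → PStar k) (ustar : O1 → Finset O1) (vstar : O1 → O1 → Finset O1)
    (hudisj : ∀ ξ₁ ξ₂ : O1, ξ₁ ≠ ξ₂ → ∀ α ∈ ustar ξ₁, α ∉ ustar ξ₂)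
    (hvsub : ∀ ξ : O1, ∀ α ∈ ustar ξ, vstar ξ α ⊆ (q ξ).u)
    (hvnot : ∀ ξ : O1, ∀ α ∈ ustar ξ, ∃ β ∈ vstar ξ α, α ≤ β) :
    ∃ ξ : Fin (k + 1) → O1, StrictMono ξ ∧
      ∃ qq : PStar k, (∀ l, PStar.le qq (q (ξ l))) ∧
        ∀ αs : Fin (k + 1) → O1, (∀ l, αs l ∈ ustar (ξ l)) →
          ∃ w : Finset O1, w.card = k + 1 ∧
            w ⊆ Finset.univ.biUnion (fun l => vstar (ξ l) (αs l)) ∧ w ∈ qq.A := by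
  obtain ⟨r, T, -, hT, hrT, hfibT⟩ := exists_delta_root (fun ξ => (q ξ).u) Set.not_countable_univ
  let low : Set O1 := {ξ | ((ustar ξ : Set O1) ∩ ⋃ y ∈ r, Set.Iic y).Nonempty}
  have hlow : low.Countable := countable_setOf_inter_nonempty
    (fun ξ₁ ξ₂ hne => Set.disjoint_left.mpr (hudisj ξ₁ ξ₂ hne))
    (r.countable_toSet.biUnion fun y _ => O1.countable_Iic y)
  obtain ⟨c, hc⟩ := exists_not_countable_fiber (not_countable_diff hT hlow)
    fun ξ => (shape (q ξ).u (q ξ).h, fun x : r => rankIn (q ξ).u x)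
  obtain ⟨F, hFT, hFcard, hFpair⟩ := exists_finset_pairwise_inter_subset (fun ξ => (q ξ).u) hc
    (fun x hx => (hfibT x hx).mono fun _ hξ => Set.mem_sep hξ.1.1.1 hξ.2) (k + 1)
  let ξ := F.orderEmbOfFin hFcard
  have hξ l : (ξ l ∈ T ∧ ξ l ∉ low) ∧ _ = c := hFT (F.orderEmbOfFin_mem hFcard l)
  have hP : PStar.IsIsoDeltaSystem (fun l => q (ξ l)) r := by
    refine ⟨fun l m hlm => hFpair (F.orderEmbOfFin_mem hFcard l) (F.orderEmbOfFin_mem hFcard m)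
      (ξ.injective.ne hlm), fun l m => ?_⟩
    have hlm := (hξ l).2.trans (hξ m).2.symm
    exact exists_transport (congrArg Prod.fst hlm) (hrT _ (hξ l).1.1) (hrT _ (hξ m).1.1)
      fun x hx => congrFun (congrArg Prod.snd hlm) ⟨x, hx⟩
  refine ⟨ξ, ξ.strictMono, hP.amalgam (by omega), hP.amalgam_le _, fun αs hαs => ?_⟩
  choose β hβv hβge using fun l => hvnot (ξ l) (αs l) (hαs l)
  have hβ l : β l ∈ (q (ξ l)).u \ r := mem_sdiff.mpr ⟨hvsub _ _ (hαs l) (hβv l),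
    fun hβr => (hξ l).1.2 ⟨αs l, hαs l, Set.mem_biUnion hβr (hβge l)⟩⟩
  have hmem := hP.image_mem_amalgam_A (by omega) hβ
  exact ⟨univ.image β, ((hP.amalgam _).hA _ hmem).2,
    image_subset_iff.mpr fun l _ => mem_biUnion.mpr ⟨l, mem_univ l, hβv l⟩, hmem⟩

/-- Lemma 2.4(5) of Bagaria–Shelah (in ground-model terms): given conditions
`q ξ ∈ P_*^k` for `ξ < ω₁`, pairwise disjoint finite nonempty sets
`u* ξ ⊆ u_{q ξ}`, and for each `α ∈ u* ξ` a set `v* ξ α ⊆ u_{q ξ}` none of whose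
`(k+1)`-element subsets belongs to `A_{q ξ}` and which is not contained in `α`,
there are `ξ₀ < … < ξ_k` and a condition `qq` extending each `q (ξ ℓ)` such that
for every choice `α ℓ ∈ u* (ξ ℓ)`, some `(k+1)`-element subset of
`⋃_{ℓ ≤ k} v* (ξ ℓ) (α ℓ)` belongs to `A_qq`. -/
theorem pstar_kill_linked (k : ℕ) (hk : 2 ≤ k)
    (q : O1 → PStar k) (ustar : O1 → Finset O1) (vstar : O1 → O1 → Finset O1)
    (husub : ∀ ξ : O1, ustar ξ ⊆ (q ξ).u)
    (hune : ∀ ξ : O1, (ustar ξ).Nonempty)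
    (hudisj : ∀ ξ₁ ξ₂ : O1, ξ₁ ≠ ξ₂ → ∀ α ∈ ustar ξ₁, α ∉ ustar ξ₂)
    (hvsub : ∀ ξ : O1, ∀ α ∈ ustar ξ, vstar ξ α ⊆ (q ξ).u)
    (hvA : ∀ ξ : O1, ∀ α ∈ ustar ξ, ∀ a : Finset O1,
      a.card = k + 1 → a ⊆ vstar ξ α → a ∉ (q ξ).A)
    (hvnot : ∀ ξ : O1, ∀ α ∈ ustar ξ, ∃ β ∈ vstar ξ α, α ≤ β) :
    ∃ ξ : Fin (k + 1) → O1, StrictMono ξ ∧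
      ∃ qq : PStar k, (∀ l, PStar.le qq (q (ξ l))) ∧
        ∀ αs : Fin (k + 1) → O1, (∀ l, αs l ∈ ustar (ξ l)) →
          ∃ w : Finset O1, w.card = k + 1 ∧
            w ⊆ Finset.univ.biUnion (fun l => vstar (ξ l) (αs l)) ∧ w ∈ qq.A :=
  pstar_kill_linked_general k hk q ustar vstar hudisj hvsub hvnot
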